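/- (B-sub-update of model BC decreases the cost.) Let A_t ∈ ℝ^{M×N} be nonnegative for t = 1,…,T, Y ∈ ℝ^{M×T} nonnegative, λ_B, μ_B, τ ≥ 0, fix C ∈ ℝ^{K×T} nonnegative, and let B̃ ∈ ℝ^{N×K} have strictly positive entries. With TV, P, Z defined as in the context, define B⁺ := B̃ ∘ (Σ_{t=1}^T A_tᵀY_{•,t}·(Cᵀ)_{t,•} + τP(B̃) ∘ Z(B̃)) ⊘ (Σ_{t=1}^T A_tᵀA_t(B̃C)_{•,t}·(Cᵀ)_{t,•} + μ_B B̃ + λ_B𝟙_{N×K} + τB̃ ∘ P(B̃)), and assume every entry of the denominator matrix is strictly positive. Then Σ_{t=1}^T (1/2)‖A_t(B⁺C)_{•,t} − Y_{•,t}‖₂² + λ_B‖B⁺‖₁ + (μ_B/2)‖B⁺‖_F² + (τ/2)TV(B⁺) ≤ Σ_{t=1}^T (1/2)‖A_t(B̃C)_{•,t} − Y_{•,t}‖₂² + λ_B‖B̃‖₁ + (μ_B/2)‖B̃‖_F² + (τ/2)TV(B̃). -/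

import Mathlib

open Matrix BigOperators

/-- `|∇_{nk}B| = sqrt(ε² + Σ_{ℓ∈𝒩_n}(B_{nk} − B_{ℓk})²)`. -/
noncomputable def gradAbs (N K : ℕ) (ε : ℝ) (nbr : Fin N → Finset (Fin N))
    (B : Matrix (Fin N) (Fin K) ℝ) (n : Fin N) (k : Fin K) : ℝ :=
  Real.sqrt (ε ^ 2 + ∑ ℓ ∈ nbr n, (B n k - B ℓ k) ^ 2)

/-- The smoothed isotropic total variation `TV(B) = Σ_k Σ_n |∇_{nk}B|`. -/
noncomputable def smoothTV (N K : ℕ) (ε : ℝ) (nbr : Fin N → Finset (Fin N))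
    (B : Matrix (Fin N) (Fin K) ℝ) : ℝ :=
  ∑ k : Fin K, ∑ n : Fin N, gradAbs N K ε nbr B n k

/-- The matrix `P(B)` from the TV surrogate construction. -/
noncomputable def Pmat (N K : ℕ) (ε : ℝ) (nbr : Fin N → Finset (Fin N))
    (B : Matrix (Fin N) (Fin K) ℝ) : Matrix (Fin N) (Fin K) ℝ :=
  fun n k =>
    (1 / gradAbs N K ε nbr B n k) * (∑ _ℓ ∈ nbr n, (1 : ℝ))
      + ∑ ℓ ∈ Finset.univ.filter (fun ℓ => n ∈ nbr ℓ), 1 / gradAbs N K ε nbr B ℓ k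

/-- The matrix `Z(B)` from the TV surrogate construction. -/
noncomputable def Zmat (N K : ℕ) (ε : ℝ) (nbr : Fin N → Finset (Fin N))
    (B : Matrix (Fin N) (Fin K) ℝ) : Matrix (Fin N) (Fin K) ℝ :=
  fun n k =>
    (1 / Pmat N K ε nbr B n k) *
      ((1 / gradAbs N K ε nbr B n k) * (∑ ℓ ∈ nbr n, (B n k + B ℓ k) / 2)
        + ∑ ℓ ∈ Finset.univ.filter (fun ℓ => n ∈ nbr ℓ),
            (B n k + B ℓ k) / (2 * gradAbs N K ε nbr B ℓ k))

/-- Per-entry key algebra: the multiplicative update decreases the separable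
quadratic surrogate. -/
lemma key_quad (xt lam al be d x : ℝ) (hxt : 0 < xt) (hlam : 0 ≤ lam)
    (hd : 0 < d) (hdef : d = al * xt + lam) (hx : x = xt * (be + lam) / d) :
    (1/2) * al * (x^2 - xt^2) - be * (x - xt) ≤ 0 := by
  have hd' : d ≠ 0 := ne_of_gt hd
  have hid : (1/2) * al * (x^2 - xt^2) - be * (x - xt)
      = -(xt * (al * xt - be)^2 * (d + lam)) / (2 * d^2) := by
    subst hx
    have hal : al = (d - lam) / xt := by
      field_simp [ne_of_gt hxt] at hdef ⊢; linarith
    subst hal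
    field_simp
    ring
  rw [hid]
  apply div_nonpos_of_nonpos_of_nonneg
  · have : 0 ≤ xt * (al * xt - be)^2 * (d + lam) := by positivity
    linarith
  · positivity


/-- Diagonal dominance bound for nonnegative quadratic forms. -/
lemma diag_dom {ι κ : Type*} [Fintype ι] [Fintype κ]
    (W : κ → ι → ℝ) (hW : ∀ m i, 0 ≤ W m i)
    (xt : ι → ℝ) (hxt : ∀ i, 0 < xt i) (v : ι → ℝ) :
    ∑ m, (∑ i, W m i * v i)^2
      ≤ ∑ i, (∑ m, W m i * (∑ j, W m j * xt j)) * (v i)^2 / xt i := by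
  have hS : ∀ i j : ι, 0 ≤ ∑ m, W m i * W m j := fun i j =>
    Finset.sum_nonneg fun m _ => mul_nonneg (hW m i) (hW m j)
  have hL : ∑ m, (∑ i, W m i * v i)^2
      = ∑ i, ∑ j, (∑ m, W m i * W m j) * (v i * v j) := by
    simp_rw [sq, Finset.sum_mul_sum]
    rw [Finset.sum_comm]
    refine Finset.sum_congr rfl fun i _ => ?_
    rw [Finset.sum_comm]
    refine Finset.sum_congr rfl fun j _ => ?_
    rw [Finset.sum_mul]
    exact Finset.sum_congr rfl fun m _ => by ring
  have hR : ∑ i, (∑ m, W m i * (∑ j, W m j * xt j)) * (v i)^2 / xt i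
      = ∑ i, ∑ j, (∑ m, W m i * W m j) * (xt j * (v i)^2 / xt i) := by
    refine Finset.sum_congr rfl fun i _ => ?_
    have : (∑ m, W m i * (∑ j, W m j * xt j))
        = ∑ j, (∑ m, W m i * W m j) * xt j := by
      simp_rw [Finset.mul_sum]
      rw [Finset.sum_comm]
      refine Finset.sum_congr rfl fun j _ => ?_
      rw [Finset.sum_mul]
      exact Finset.sum_congr rfl fun m _ => by ring
    rw [this, Finset.sum_mul, Finset.sum_div]
    exact Finset.sum_congr rfl fun j _ => by ring
  rw [hL, hR]
  have key : ∀ i j : ι, 2 * (v i * v j) ≤ xt j * (v i)^2 / xt i + xt i * (v j)^2 / xt j := by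
    intro i j
    have hi := hxt i; have hj := hxt j
    rw [div_add_div _ _ (ne_of_gt hi) (ne_of_gt hj), le_div_iff₀ (by positivity)]
    nlinarith [sq_nonneg (xt j * v i - xt i * v j)]
  have h2 : 2 * (∑ i, ∑ j, (∑ m, W m i * W m j) * (v i * v j))
      ≤ 2 * (∑ i, ∑ j, (∑ m, W m i * W m j) * (xt j * (v i)^2 / xt i)) := by
    have hsymm : (∑ i, ∑ j, (∑ m, W m i * W m j) * (xt j * (v i)^2 / xt i))
        = ∑ i, ∑ j, (∑ m, W m i * W m j) * (xt i * (v j)^2 / xt j) := by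
      rw [Finset.sum_comm]
      refine Finset.sum_congr rfl fun i _ => Finset.sum_congr rfl fun j _ => ?_
      congr 1
      exact Finset.sum_congr rfl fun m _ => by ring
    calc 2 * (∑ i, ∑ j, (∑ m, W m i * W m j) * (v i * v j))
        = ∑ i, ∑ j, (∑ m, W m i * W m j) * (2 * (v i * v j)) := by
          rw [Finset.mul_sum]
          exact Finset.sum_congr rfl fun i _ => by
            rw [Finset.mul_sum]; exact Finset.sum_congr rfl fun j _ => by ring
      _ ≤ ∑ i, ∑ j, (∑ m, W m i * W m j) *
            (xt j * (v i)^2 / xt i + xt i * (v j)^2 / xt j) := by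
          refine Finset.sum_le_sum fun i _ => Finset.sum_le_sum fun j _ => ?_
          exact mul_le_mul_of_nonneg_left (key i j) (hS i j)
      _ = (∑ i, ∑ j, (∑ m, W m i * W m j) * (xt j * (v i)^2 / xt i))
          + ∑ i, ∑ j, (∑ m, W m i * W m j) * (xt i * (v j)^2 / xt j) := by
          simp_rw [mul_add, Finset.sum_add_distrib]
      _ = 2 * (∑ i, ∑ j, (∑ m, W m i * W m j) * (xt j * (v i)^2 / xt i)) := by
          rw [← hsymm]; ring
  linarith

/-- Majorization of one quadratic data-fit term. -/
lemma data_step {ι κ : Type*} [Fintype ι] [Fintype κ]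
    (W : κ → ι → ℝ) (hW : ∀ m i, 0 ≤ W m i) (y : κ → ℝ)
    (xt x : ι → ℝ) (hxt : ∀ i, 0 < xt i) :
    (1/2) * ∑ m, (∑ i, W m i * x i - y m)^2
      ≤ (1/2) * ∑ m, (∑ i, W m i * xt i - y m)^2
        + ∑ i, (((∑ m, W m i * (∑ j, W m j * xt j)) - ∑ m, W m i * y m) * (x i - xt i)
            + (1/2) * (∑ m, W m i * (∑ j, W m j * xt j)) * (x i - xt i)^2 / xt i) := by
  set Δ : ι → ℝ := fun i => x i - xt i with hΔ
  set L : κ → ℝ := fun m => ∑ j, W m j * xt j with hLdef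
  set E : κ → ℝ := fun m => L m - y m with hE
  set Q : ι → ℝ := fun i => ∑ m, W m i * L m with hQ
  set R : ι → ℝ := fun i => ∑ m, W m i * y m with hR
  have hexp : ∑ m, (∑ i, W m i * x i - y m)^2
      = ∑ m, (L m - y m)^2 + ∑ m, 2 * E m * (∑ i, W m i * Δ i)
        + ∑ m, (∑ i, W m i * Δ i)^2 := by
    rw [← Finset.sum_add_distrib, ← Finset.sum_add_distrib]
    refine Finset.sum_congr rfl fun m _ => ?_
    have hx : ∑ i, W m i * x i = L m + ∑ i, W m i * Δ i := by
      rw [hLdef, ← Finset.sum_add_distrib]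
      exact Finset.sum_congr rfl fun i _ => by simp [hΔ]; ring
    rw [hx, hE]; ring
  have hcross : ∑ m, 2 * E m * (∑ i, W m i * Δ i) = 2 * ∑ i, (Q i - R i) * Δ i := by
    calc ∑ m, 2 * E m * (∑ i, W m i * Δ i)
        = ∑ m, ∑ i, 2 * E m * (W m i * Δ i) := by
          exact Finset.sum_congr rfl fun m _ => by rw [Finset.mul_sum]
      _ = ∑ i, ∑ m, 2 * E m * (W m i * Δ i) := Finset.sum_comm
      _ = ∑ i, 2 * ((Q i - R i) * Δ i) := by
          refine Finset.sum_congr rfl fun i _ => ?_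
          have : ∀ m : κ, 2 * E m * (W m i * Δ i)
              = 2 * ((W m i * L m - W m i * y m) * Δ i) := fun m => by
            ring
          simp_rw [this, ← Finset.mul_sum]
          rw [← Finset.sum_mul, Finset.sum_sub_distrib]
      _ = 2 * ∑ i, (Q i - R i) * Δ i := by rw [Finset.mul_sum]
  have hquad : ∑ m, (∑ i, W m i * Δ i)^2 ≤ ∑ i, Q i * (Δ i)^2 / xt i :=
    diag_dom W hW xt hxt Δ
  have hrhs : ∑ i, ((Q i - R i) * Δ i + (1/2) * Q i * (Δ i)^2 / xt i)
      = ∑ i, (Q i - R i) * Δ i + (1/2) * ∑ i, Q i * (Δ i)^2 / xt i := by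
    rw [Finset.sum_add_distrib, Finset.mul_sum]
    refine congrArg _ (Finset.sum_congr rfl fun i _ => by ring)
  calc (1/2) * ∑ m, (∑ i, W m i * x i - y m)^2
      = (1/2) * ∑ m, (L m - y m)^2 + ∑ i, (Q i - R i) * Δ i
        + (1/2) * ∑ m, (∑ i, W m i * Δ i)^2 := by rw [hexp, hcross]; ring
    _ ≤ (1/2) * ∑ m, (L m - y m)^2 + ∑ i, (Q i - R i) * Δ i
        + (1/2) * ∑ i, Q i * (Δ i)^2 / xt i := by linarith
    _ = _ := by rw [hrhs]; simp only [hE, hLdef]; ring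


lemma gradAbs_pos {N K : ℕ} {ε : ℝ} (hε : 0 < ε) (nbr : Fin N → Finset (Fin N))
    (B : Matrix (Fin N) (Fin K) ℝ) (n : Fin N) (k : Fin K) :
    0 < gradAbs N K ε nbr B n k := by
  apply Real.sqrt_pos.mpr
  have : 0 ≤ ∑ ℓ ∈ nbr n, (B n k - B ℓ k) ^ 2 :=
    Finset.sum_nonneg fun ℓ _ => sq_nonneg _
  positivity

lemma gradAbs_sq {N K : ℕ} {ε : ℝ} (hε : 0 < ε) (nbr : Fin N → Finset (Fin N))
    (B : Matrix (Fin N) (Fin K) ℝ) (n : Fin N) (k : Fin K) :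
    (gradAbs N K ε nbr B n k) ^ 2 = ε ^ 2 + ∑ ℓ ∈ nbr n, (B n k - B ℓ k) ^ 2 := by
  apply Real.sq_sqrt
  have : 0 ≤ ∑ ℓ ∈ nbr n, (B n k - B ℓ k) ^ 2 :=
    Finset.sum_nonneg fun ℓ _ => sq_nonneg _
  positivity

lemma Pmat_pos {N K : ℕ} {ε : ℝ} (hε : 0 < ε) (nbr : Fin N → Finset (Fin N))
    (hnbr : ∀ n, (nbr n).Nonempty)
    (B : Matrix (Fin N) (Fin K) ℝ) (n : Fin N) (k : Fin K) :
    0 < Pmat N K ε nbr B n k := by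
  unfold Pmat
  have h1 : 0 < (1 / gradAbs N K ε nbr B n k) * (∑ _ℓ ∈ nbr n, (1 : ℝ)) := by
    apply mul_pos
    · exact one_div_pos.mpr (gradAbs_pos hε nbr B n k)
    · rw [Finset.sum_const, nsmul_eq_mul, mul_one]
      exact_mod_cast Nat.pos_of_ne_zero (by
        simpa [Finset.card_eq_zero] using (hnbr n).card_pos.ne')
  have h2 : 0 ≤ ∑ ℓ ∈ Finset.univ.filter (fun ℓ => n ∈ nbr ℓ),
      1 / gradAbs N K ε nbr B ℓ k :=
    Finset.sum_nonneg fun ℓ _ => le_of_lt (one_div_pos.mpr (gradAbs_pos hε nbr B ℓ k))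
  linarith

lemma sqrt_maj (u ut : ℝ) (hu : 0 ≤ u) (hut : 0 < ut) :
    Real.sqrt u ≤ Real.sqrt ut + (u - ut) / (2 * Real.sqrt ut) := by
  set s := Real.sqrt ut with hs
  have hs0 : 0 < s := Real.sqrt_pos.mpr hut
  have hs2 : s ^ 2 = ut := Real.sq_sqrt hut.le
  have hu2 : Real.sqrt u ^ 2 = u := Real.sq_sqrt hu
  have key : 2 * s * Real.sqrt u ≤ s ^ 2 + u := by
    nlinarith [sq_nonneg (s - Real.sqrt u)]
  have h1 : Real.sqrt u ≤ (s ^ 2 + u) / (2 * s) := by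
    rw [le_div_iff₀ (by positivity)]; linarith
  have h2 : (s ^ 2 + u) / (2 * s) = s + (u - ut) / (2 * s) := by
    rw [← hs2]; field_simp; ring
  linarith [h2 ▸ h1]

lemma swap_nbr {N : ℕ} (nbr : Fin N → Finset (Fin N)) (f : Fin N → Fin N → ℝ) :
    ∑ n, ∑ ℓ ∈ nbr n, f n ℓ
      = ∑ n, ∑ ℓ ∈ Finset.univ.filter (fun ℓ => n ∈ nbr ℓ), f ℓ n := by
  have h1 : ∀ n : Fin N, ∑ ℓ ∈ nbr n, f n ℓ
      = ∑ ℓ : Fin N, if ℓ ∈ nbr n then f n ℓ else 0 := by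
    intro n
    rw [Finset.sum_ite_mem, Finset.univ_inter]
  have h2 : ∀ n : Fin N, ∑ ℓ ∈ Finset.univ.filter (fun ℓ => n ∈ nbr ℓ), f ℓ n
      = ∑ ℓ : Fin N, if n ∈ nbr ℓ then f ℓ n else 0 := by
    intro n
    rw [Finset.sum_filter]
  simp_rw [h1, h2]
  exact Finset.sum_comm

lemma tv_step {N K : ℕ} {ε : ℝ} (hε : 0 < ε) (nbr : Fin N → Finset (Fin N))
    (hnbr : ∀ n, (nbr n).Nonempty) (Bt Bp : Matrix (Fin N) (Fin K) ℝ) :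
    smoothTV N K ε nbr Bp ≤ smoothTV N K ε nbr Bt
      + ∑ n, ∑ k, (Pmat N K ε nbr Bt n k * ((Bp n k)^2 - (Bt n k)^2)
          - 2 * (Pmat N K ε nbr Bt n k * Zmat N K ε nbr Bt n k) * (Bp n k - Bt n k)) := by
  classical
  have hgpos : ∀ n k, 0 < gradAbs N K ε nbr Bt n k := fun n k => gradAbs_pos hε nbr Bt n k
  set t1 : Fin K → Fin N → Fin N → ℝ := fun k n ℓ =>
    (Bp n k - (Bt n k + Bt ℓ k)/2)^2 - (Bt n k - (Bt n k + Bt ℓ k)/2)^2 with ht1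
  set t2 : Fin K → Fin N → Fin N → ℝ := fun k n ℓ =>
    (Bp ℓ k - (Bt n k + Bt ℓ k)/2)^2 - (Bt ℓ k - (Bt n k + Bt ℓ k)/2)^2 with ht2
  have step1 : ∀ n k, gradAbs N K ε nbr Bp n k
      ≤ gradAbs N K ε nbr Bt n k
        + ((1 / gradAbs N K ε nbr Bt n k) * ∑ ℓ ∈ nbr n, (t1 k n ℓ + t2 k n ℓ)) := by
    intro n k
    have hu : (0:ℝ) ≤ ε ^ 2 + ∑ ℓ ∈ nbr n, (Bp n k - Bp ℓ k) ^ 2 := by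
      have : 0 ≤ ∑ ℓ ∈ nbr n, (Bp n k - Bp ℓ k) ^ 2 :=
        Finset.sum_nonneg fun ℓ _ => sq_nonneg _
      positivity
    have hut : (0:ℝ) < ε ^ 2 + ∑ ℓ ∈ nbr n, (Bt n k - Bt ℓ k) ^ 2 := by
      have : 0 ≤ ∑ ℓ ∈ nbr n, (Bt n k - Bt ℓ k) ^ 2 :=
        Finset.sum_nonneg fun ℓ _ => sq_nonneg _
      positivity
    have hgp := hgpos n k
    have h1 : gradAbs N K ε nbr Bp n k
        ≤ gradAbs N K ε nbr Bt n k + ((∑ ℓ ∈ nbr n, (Bp n k - Bp ℓ k) ^ 2)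
            - ∑ ℓ ∈ nbr n, (Bt n k - Bt ℓ k) ^ 2) / (2 * gradAbs N K ε nbr Bt n k) := by
      have := sqrt_maj (ε ^ 2 + ∑ ℓ ∈ nbr n, (Bp n k - Bp ℓ k) ^ 2)
        (ε ^ 2 + ∑ ℓ ∈ nbr n, (Bt n k - Bt ℓ k) ^ 2) hu hut
      simpa [gradAbs] using this
    have h2 : (∑ ℓ ∈ nbr n, (Bp n k - Bp ℓ k) ^ 2)
        - ∑ ℓ ∈ nbr n, (Bt n k - Bt ℓ k) ^ 2
        ≤ ∑ ℓ ∈ nbr n, 2 * (t1 k n ℓ + t2 k n ℓ) := by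
      rw [← Finset.sum_sub_distrib]
      refine Finset.sum_le_sum fun ℓ _ => ?_
      simp only [ht1, ht2]
      nlinarith [sq_nonneg (Bp n k + Bp ℓ k - Bt n k - Bt ℓ k)]
    have h3 : ((∑ ℓ ∈ nbr n, (Bp n k - Bp ℓ k) ^ 2)
        - ∑ ℓ ∈ nbr n, (Bt n k - Bt ℓ k) ^ 2) / (2 * gradAbs N K ε nbr Bt n k)
        ≤ (∑ ℓ ∈ nbr n, 2 * (t1 k n ℓ + t2 k n ℓ)) / (2 * gradAbs N K ε nbr Bt n k) :=
      (div_le_div_iff_of_pos_right (by positivity)).mpr h2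
    have h4 : (∑ ℓ ∈ nbr n, 2 * (t1 k n ℓ + t2 k n ℓ)) / (2 * gradAbs N K ε nbr Bt n k)
        = (1 / gradAbs N K ε nbr Bt n k) * ∑ ℓ ∈ nbr n, (t1 k n ℓ + t2 k n ℓ) := by
      rw [← Finset.mul_sum, mul_div_mul_left _ _ (two_ne_zero)]
      ring
    rw [← h4]
    linarith
  have hE : ∀ n k,
      (∑ ℓ ∈ nbr n, (1 / gradAbs N K ε nbr Bt n k) * t1 k n ℓ)
        + (∑ ℓ ∈ Finset.univ.filter (fun ℓ => n ∈ nbr ℓ),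
            (1 / gradAbs N K ε nbr Bt ℓ k) * t2 k ℓ n)
      = Pmat N K ε nbr Bt n k * ((Bp n k)^2 - (Bt n k)^2)
        - 2 * (Pmat N K ε nbr Bt n k * Zmat N K ε nbr Bt n k) * (Bp n k - Bt n k) := by
    intro n k
    have hPne : Pmat N K ε nbr Bt n k ≠ 0 := ne_of_gt (Pmat_pos hε nbr hnbr Bt n k)
    have hPZ : Pmat N K ε nbr Bt n k * Zmat N K ε nbr Bt n k
        = (1 / gradAbs N K ε nbr Bt n k) * (∑ ℓ ∈ nbr n, (Bt n k + Bt ℓ k) / 2)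
          + ∑ ℓ ∈ Finset.univ.filter (fun ℓ => n ∈ nbr ℓ),
              (Bt n k + Bt ℓ k) / (2 * gradAbs N K ε nbr Bt ℓ k) := by
      rw [Zmat, ← mul_assoc, mul_one_div_cancel hPne, one_mul]
    rw [hPZ, Pmat]
    simp only [ht1, ht2, mul_add, add_mul, Finset.mul_sum, Finset.sum_mul]
    rw [show ∀ a b c d : ℝ, (a + b) - (c + d) = (a - c) + (b - d) from fun a b c d => by ring]
    rw [← Finset.sum_sub_distrib, ← Finset.sum_sub_distrib]
    congr 1
    · exact Finset.sum_congr rfl fun ℓ _ => by ring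
    · exact Finset.sum_congr rfl fun ℓ _ => by ring
  -- assemble
  have hsum : smoothTV N K ε nbr Bp
      ≤ smoothTV N K ε nbr Bt
        + ∑ k, ∑ n, (1 / gradAbs N K ε nbr Bt n k) * ∑ ℓ ∈ nbr n, (t1 k n ℓ + t2 k n ℓ) := by
    rw [smoothTV, smoothTV, ← Finset.sum_add_distrib]
    refine Finset.sum_le_sum fun k _ => ?_
    rw [← Finset.sum_add_distrib]
    exact Finset.sum_le_sum fun n _ => step1 n k
  have hswap : ∀ k : Fin K,
      ∑ n, (1 / gradAbs N K ε nbr Bt n k) * ∑ ℓ ∈ nbr n, (t1 k n ℓ + t2 k n ℓ)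
      = ∑ n, (Pmat N K ε nbr Bt n k * ((Bp n k)^2 - (Bt n k)^2)
          - 2 * (Pmat N K ε nbr Bt n k * Zmat N K ε nbr Bt n k) * (Bp n k - Bt n k)) := by
    intro k
    have split : ∀ n, (1 / gradAbs N K ε nbr Bt n k) * ∑ ℓ ∈ nbr n, (t1 k n ℓ + t2 k n ℓ)
        = (∑ ℓ ∈ nbr n, (1 / gradAbs N K ε nbr Bt n k) * t1 k n ℓ)
          + ∑ ℓ ∈ nbr n, (1 / gradAbs N K ε nbr Bt n k) * t2 k n ℓ := by
      intro n
      rw [Finset.mul_sum, ← Finset.sum_add_distrib]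
      exact Finset.sum_congr rfl fun ℓ _ => by ring
    simp_rw [split]
    rw [Finset.sum_add_distrib]
    rw [swap_nbr nbr (fun n ℓ => (1 / gradAbs N K ε nbr Bt n k) * t2 k n ℓ)]
    rw [← Finset.sum_add_distrib]
    exact Finset.sum_congr rfl fun n _ => hE n k
  calc smoothTV N K ε nbr Bp
      ≤ smoothTV N K ε nbr Bt
        + ∑ k, ∑ n, (1 / gradAbs N K ε nbr Bt n k) * ∑ ℓ ∈ nbr n, (t1 k n ℓ + t2 k n ℓ) := hsum
    _ = smoothTV N K ε nbr Bt
        + ∑ k, ∑ n, (Pmat N K ε nbr Bt n k * ((Bp n k)^2 - (Bt n k)^2)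
            - 2 * (Pmat N K ε nbr Bt n k * Zmat N K ε nbr Bt n k) * (Bp n k - Bt n k)) := by
        rw [Finset.sum_congr rfl fun k _ => hswap k]
    _ = _ := by rw [Finset.sum_comm]

/-- **The `B` sub-update of model `BC` decreases the cost.**
With nonnegative `A_t`, `Y`, `C`, regularisation parameters `λ_B, μ_B, τ ≥ 0`, strictly
positive `Bt`, and a strictly positive denominator matrix, the multiplicative `B`-update
of the `BC` model does not increase the `B`-part of the `BC` cost function. -/
theorem BC_B_subupdate_decreases_cost
    (M N K T : ℕ)
    (ε : ℝ) (hε : 0 < ε)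
    (nbr : Fin N → Finset (Fin N)) (hnbr : ∀ n, (nbr n).Nonempty)
    (A : Fin T → Matrix (Fin M) (Fin N) ℝ) (hA : ∀ t m n, 0 ≤ A t m n)
    (Y : Matrix (Fin M) (Fin T) ℝ) (hY : ∀ m t, 0 ≤ Y m t)
    (lamB muB τ : ℝ) (hlamB : 0 ≤ lamB) (hmuB : 0 ≤ muB) (hτ : 0 ≤ τ)
    (C : Matrix (Fin K) (Fin T) ℝ) (hC : ∀ k t, 0 ≤ C k t)
    (Bt : Matrix (Fin N) (Fin K) ℝ) (hBt : ∀ n k, 0 < Bt n k)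
    (hden : ∀ n k,
      0 < (∑ t, (((A t)ᵀ * A t) *ᵥ fun n' => (Bt * C) n' t) n * C k t)
            + muB * Bt n k + lamB + τ * Bt n k * Pmat N K ε nbr Bt n k)
    (Bp : Matrix (Fin N) (Fin K) ℝ)
    (hBp : ∀ n k, Bp n k =
      Bt n k * ((∑ t, ((A t)ᵀ *ᵥ fun m => Y m t) n * C k t)
                + τ * Pmat N K ε nbr Bt n k * Zmat N K ε nbr Bt n k)
        / ((∑ t, (((A t)ᵀ * A t) *ᵥ fun n' => (Bt * C) n' t) n * C k t)
            + muB * Bt n k + lamB + τ * Bt n k * Pmat N K ε nbr Bt n k)) :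
    (∑ t, (1/2) * ∑ m, ((A t *ᵥ fun n => (Bp * C) n t) m - Y m t) ^ 2)
        + lamB * (∑ n, ∑ k, |Bp n k|)
        + (muB/2) * (∑ n, ∑ k, (Bp n k) ^ 2)
        + (τ/2) * smoothTV N K ε nbr Bp
      ≤ (∑ t, (1/2) * ∑ m, ((A t *ᵥ fun n => (Bt * C) n t) m - Y m t) ^ 2)
        + lamB * (∑ n, ∑ k, |Bt n k|)
        + (muB/2) * (∑ n, ∑ k, (Bt n k) ^ 2)
        + (τ/2) * smoothTV N K ε nbr Bt := by
  classical
  -- abbreviations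
  set Q : Fin N → Fin K → ℝ :=
    fun n k => ∑ t, (((A t)ᵀ * A t) *ᵥ fun n' => (Bt * C) n' t) n * C k t with hQdef
  set R : Fin N → Fin K → ℝ :=
    fun n k => ∑ t, ((A t)ᵀ *ᵥ fun m => Y m t) n * C k t with hRdef
  -- nonnegativity facts
  have hR0 : ∀ n k, 0 ≤ R n k := by
    intro n k
    rw [hRdef]
    refine Finset.sum_nonneg fun t _ => mul_nonneg ?_ (hC k t)
    simp only [Matrix.mulVec, dotProduct, Matrix.transpose_apply]
    exact Finset.sum_nonneg fun m _ => mul_nonneg (hA t m n) (hY m t)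
  have hgpos : ∀ n k, 0 < gradAbs N K ε nbr Bt n k := fun n k => gradAbs_pos hε nbr Bt n k
  have hPpos : ∀ n k, 0 < Pmat N K ε nbr Bt n k := fun n k => Pmat_pos hε nbr hnbr Bt n k
  have hZ0 : ∀ n k, 0 ≤ Zmat N K ε nbr Bt n k := by
    intro n k
    rw [Zmat]
    refine mul_nonneg (le_of_lt (one_div_pos.mpr (hPpos n k))) (add_nonneg ?_ ?_)
    · refine mul_nonneg (le_of_lt (one_div_pos.mpr (hgpos n k))) ?_
      refine Finset.sum_nonneg fun ℓ _ => ?_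
      have := (hBt n k).le; have := (hBt ℓ k).le
      positivity
    · refine Finset.sum_nonneg fun ℓ _ => ?_
      have h1 := (hBt n k).le; have h2 := (hBt ℓ k).le
      have h3 := hgpos ℓ k
      positivity
  have hBp0 : ∀ n k, 0 ≤ Bp n k := by
    intro n k
    rw [hBp n k]
    have hnum : 0 ≤ R n k + τ * Pmat N K ε nbr Bt n k * Zmat N K ε nbr Bt n k :=
      add_nonneg (hR0 n k)
        (mul_nonneg (mul_nonneg hτ (hPpos n k).le) (hZ0 n k))
    rw [hRdef] at hnum
    exact div_nonneg (mul_nonneg (hBt n k).le hnum) (hden n k).le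
  -- data-fit majorization
  have hdata : (∑ t, (1/2) * ∑ m, ((A t *ᵥ fun n => (Bp * C) n t) m - Y m t) ^ 2)
      ≤ (∑ t, (1/2) * ∑ m, ((A t *ᵥ fun n => (Bt * C) n t) m - Y m t) ^ 2)
        + ∑ n, ∑ k, ((Q n k - R n k) * (Bp n k - Bt n k)
            + (1/2) * Q n k * (Bp n k - Bt n k)^2 / Bt n k) := by
    have key_t : ∀ t : Fin T,
        (1/2) * ∑ m, ((A t *ᵥ fun n => (Bp * C) n t) m - Y m t) ^ 2
          ≤ (1/2) * ∑ m, ((A t *ᵥ fun n => (Bt * C) n t) m - Y m t) ^ 2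
            + ∑ p : Fin N × Fin K,
                (((((A t)ᵀ * A t) *ᵥ fun n' => (Bt * C) n' t) p.1 * C p.2 t
                   - ((A t)ᵀ *ᵥ fun m => Y m t) p.1 * C p.2 t) * (Bp p.1 p.2 - Bt p.1 p.2)
                 + (1/2) * ((((A t)ᵀ * A t) *ᵥ fun n' => (Bt * C) n' t) p.1 * C p.2 t)
                     * (Bp p.1 p.2 - Bt p.1 p.2)^2 / Bt p.1 p.2) := by
      intro t
      have b1 : ∀ (B : Matrix (Fin N) (Fin K) ℝ) (m : Fin M),
          (∑ p : Fin N × Fin K, A t m p.1 * C p.2 t * B p.1 p.2)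
            = (A t *ᵥ fun n => (B * C) n t) m := by
        intro B m
        rw [Fintype.sum_prod_type]
        simp only [Matrix.mulVec, dotProduct, Matrix.mul_apply]
        refine Finset.sum_congr rfl fun n _ => ?_
        rw [Finset.mul_sum]
        exact Finset.sum_congr rfl fun k _ => by ring
      have b3 : ∀ p : Fin N × Fin K,
          (∑ m, A t m p.1 * C p.2 t * Y m t)
            = ((A t)ᵀ *ᵥ fun m => Y m t) p.1 * C p.2 t := by
        intro p
        simp only [Matrix.mulVec, dotProduct, Matrix.transpose_apply]
        rw [Finset.sum_mul]
        exact Finset.sum_congr rfl fun m _ => by ring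
      have b2 : ∀ p : Fin N × Fin K,
          (∑ m, A t m p.1 * C p.2 t * ((A t *ᵥ fun n => (Bt * C) n t) m))
            = (((A t)ᵀ * A t) *ᵥ fun n' => (Bt * C) n' t) p.1 * C p.2 t := by
        intro p
        simp only [Matrix.mulVec, dotProduct, Matrix.mul_apply, Matrix.transpose_apply]
        calc ∑ m, A t m p.1 * C p.2 t * (∑ n', A t m n' * ∑ k', Bt n' k' * C k' t)
            = ∑ m, ∑ n', A t m p.1 * C p.2 t
                * (A t m n' * ∑ k', Bt n' k' * C k' t) := by
              exact Finset.sum_congr rfl fun m _ => by rw [Finset.mul_sum]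
          _ = ∑ n', ∑ m, A t m p.1 * C p.2 t
                * (A t m n' * ∑ k', Bt n' k' * C k' t) := Finset.sum_comm
          _ = ∑ n', (∑ m, A t m p.1 * A t m n')
                * ((∑ k', Bt n' k' * C k' t) * C p.2 t) := by
              refine Finset.sum_congr rfl fun n' _ => ?_
              rw [Finset.sum_mul]
              exact Finset.sum_congr rfl fun m _ => by ring
          _ = (∑ n', (∑ m, A t m p.1 * A t m n')
                * (∑ k', Bt n' k' * C k' t)) * C p.2 t := by
              rw [Finset.sum_mul]
              exact Finset.sum_congr rfl fun n' _ => by ring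
      have h := data_step (fun m (p : Fin N × Fin K) => A t m p.1 * C p.2 t)
          (fun m p => mul_nonneg (hA t m p.1) (hC p.2 t)) (fun m => Y m t)
          (fun p => Bt p.1 p.2) (fun p => Bp p.1 p.2) (fun p => hBt p.1 p.2)
      simp_rw [b1 Bp, b1 Bt, b3] at h
      simp_rw [b2] at h
      exact h
    calc ∑ t, (1/2) * ∑ m, ((A t *ᵥ fun n => (Bp * C) n t) m - Y m t) ^ 2
        ≤ ∑ t, ((1/2) * ∑ m, ((A t *ᵥ fun n => (Bt * C) n t) m - Y m t) ^ 2
            + ∑ p : Fin N × Fin K,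
                (((((A t)ᵀ * A t) *ᵥ fun n' => (Bt * C) n' t) p.1 * C p.2 t
                   - ((A t)ᵀ *ᵥ fun m => Y m t) p.1 * C p.2 t) * (Bp p.1 p.2 - Bt p.1 p.2)
                 + (1/2) * ((((A t)ᵀ * A t) *ᵥ fun n' => (Bt * C) n' t) p.1 * C p.2 t)
                     * (Bp p.1 p.2 - Bt p.1 p.2)^2 / Bt p.1 p.2)) :=
          Finset.sum_le_sum fun t _ => key_t t
      _ = (∑ t, (1/2) * ∑ m, ((A t *ᵥ fun n => (Bt * C) n t) m - Y m t) ^ 2)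
          + ∑ t, ∑ p : Fin N × Fin K,
                (((((A t)ᵀ * A t) *ᵥ fun n' => (Bt * C) n' t) p.1 * C p.2 t
                   - ((A t)ᵀ *ᵥ fun m => Y m t) p.1 * C p.2 t) * (Bp p.1 p.2 - Bt p.1 p.2)
                 + (1/2) * ((((A t)ᵀ * A t) *ᵥ fun n' => (Bt * C) n' t) p.1 * C p.2 t)
                     * (Bp p.1 p.2 - Bt p.1 p.2)^2 / Bt p.1 p.2) :=
          Finset.sum_add_distrib
      _ = _ := by
          congr 1
          rw [Finset.sum_comm]
          rw [Fintype.sum_prod_type]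
          refine Finset.sum_congr rfl fun n _ => Finset.sum_congr rfl fun k _ => ?_
          simp only [hQdef, hRdef]
          calc ∑ t, (((((A t)ᵀ * A t) *ᵥ fun n' => (Bt * C) n' t) n * C k t
                   - ((A t)ᵀ *ᵥ fun m => Y m t) n * C k t) * (Bp n k - Bt n k)
                 + (1/2) * ((((A t)ᵀ * A t) *ᵥ fun n' => (Bt * C) n' t) n * C k t)
                     * (Bp n k - Bt n k)^2 / Bt n k)
              = ∑ t, (((((A t)ᵀ * A t) *ᵥ fun n' => (Bt * C) n' t) n * C k t)
                    * ((Bp n k - Bt n k) + (1/2) * (Bp n k - Bt n k)^2 / Bt n k)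
                  - (((A t)ᵀ *ᵥ fun m => Y m t) n * C k t) * (Bp n k - Bt n k)) :=
                Finset.sum_congr rfl fun t _ => by ring
            _ = (∑ t, (((A t)ᵀ * A t) *ᵥ fun n' => (Bt * C) n' t) n * C k t)
                    * ((Bp n k - Bt n k) + (1/2) * (Bp n k - Bt n k)^2 / Bt n k)
                  - (∑ t, ((A t)ᵀ *ᵥ fun m => Y m t) n * C k t) * (Bp n k - Bt n k) := by
                rw [Finset.sum_sub_distrib, Finset.sum_mul, Finset.sum_mul]
            _ = _ := by ring
  -- per-entry decrease of the separable surrogate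
  have hkey : ∀ n k,
      (Q n k - R n k) * (Bp n k - Bt n k)
        + (1/2) * Q n k * (Bp n k - Bt n k)^2 / Bt n k
        + lamB * (Bp n k - Bt n k)
        + (muB/2) * ((Bp n k)^2 - (Bt n k)^2)
        + (τ/2) * (Pmat N K ε nbr Bt n k * ((Bp n k)^2 - (Bt n k)^2)
            - 2 * (Pmat N K ε nbr Bt n k * Zmat N K ε nbr Bt n k) * (Bp n k - Bt n k))
        ≤ 0 := by
    intro n k
    have hbt := hBt n k
    have hbtne : Bt n k ≠ 0 := ne_of_gt hbt
    set P' := Pmat N K ε nbr Bt n k with hP'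
    set Z' := Zmat N K ε nbr Bt n k with hZ'
    set al : ℝ := Q n k / Bt n k + muB + τ * P' with hal
    set be : ℝ := R n k - lamB + τ * (P' * Z') with hbe
    set d : ℝ := Q n k + muB * Bt n k + lamB + τ * Bt n k * P' with hd
    have hdpos : 0 < d := by rw [hd, hQdef]; exact hden n k
    have hdef : d = al * Bt n k + lamB := by
      rw [hd, hal]; field_simp; ring
    have hx : Bp n k = Bt n k * (be + lamB) / d := by
      rw [hbe, hd, hQdef, hRdef, hBp n k]
      rw [hP', hZ']
      ring_nf
    have hk := key_quad (Bt n k) lamB al be d (Bp n k) hbt hlamB hdpos hdef hx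
    have hiden : (Q n k - R n k) * (Bp n k - Bt n k)
        + (1/2) * Q n k * (Bp n k - Bt n k)^2 / Bt n k
        + lamB * (Bp n k - Bt n k)
        + (muB/2) * ((Bp n k)^2 - (Bt n k)^2)
        + (τ/2) * (P' * ((Bp n k)^2 - (Bt n k)^2) - 2 * (P' * Z') * (Bp n k - Bt n k))
        = (1/2) * al * ((Bp n k)^2 - (Bt n k)^2) - be * (Bp n k - Bt n k) := by
      rw [hal, hbe]; field_simp; ring
    rw [hiden]
    exact hk
  -- absolute values
  have habsp : ∀ n k, |Bp n k| = Bp n k := fun n k => abs_of_nonneg (hBp0 n k)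
  have habst : ∀ n k, |Bt n k| = Bt n k := fun n k => abs_of_nonneg (hBt n k).le
  -- TV majorization
  have htv := tv_step hε nbr hnbr Bt Bp
  -- sum up the per-entry decreases
  have hneg : ∑ n, ∑ k,
      ((Q n k - R n k) * (Bp n k - Bt n k)
        + (1/2) * Q n k * (Bp n k - Bt n k)^2 / Bt n k
        + lamB * (Bp n k - Bt n k)
        + (muB/2) * ((Bp n k)^2 - (Bt n k)^2)
        + (τ/2) * (Pmat N K ε nbr Bt n k * ((Bp n k)^2 - (Bt n k)^2)
            - 2 * (Pmat N K ε nbr Bt n k * Zmat N K ε nbr Bt n k) * (Bp n k - Bt n k)))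
      ≤ 0 :=
    Finset.sum_nonpos fun n _ => Finset.sum_nonpos fun k _ => hkey n k
  -- splitting the total per-entry sum
  have hsplit : ∑ n, ∑ k,
      ((Q n k - R n k) * (Bp n k - Bt n k)
        + (1/2) * Q n k * (Bp n k - Bt n k)^2 / Bt n k
        + lamB * (Bp n k - Bt n k)
        + (muB/2) * ((Bp n k)^2 - (Bt n k)^2)
        + (τ/2) * (Pmat N K ε nbr Bt n k * ((Bp n k)^2 - (Bt n k)^2)
            - 2 * (Pmat N K ε nbr Bt n k * Zmat N K ε nbr Bt n k) * (Bp n k - Bt n k)))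
      = (∑ n, ∑ k, ((Q n k - R n k) * (Bp n k - Bt n k)
            + (1/2) * Q n k * (Bp n k - Bt n k)^2 / Bt n k))
        + (lamB * (∑ n, ∑ k, Bp n k) - lamB * (∑ n, ∑ k, Bt n k))
        + ((muB/2) * (∑ n, ∑ k, (Bp n k)^2) - (muB/2) * (∑ n, ∑ k, (Bt n k)^2))
        + (τ/2) * (∑ n, ∑ k, (Pmat N K ε nbr Bt n k * ((Bp n k)^2 - (Bt n k)^2)
            - 2 * (Pmat N K ε nbr Bt n k * Zmat N K ε nbr Bt n k) * (Bp n k - Bt n k))) := by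
    simp only [Finset.mul_sum, ← Finset.sum_sub_distrib, ← Finset.sum_add_distrib]
    exact Finset.sum_congr rfl fun n _ => Finset.sum_congr rfl fun k _ => by ring
  have habs1 : (∑ n, ∑ k, |Bp n k|) = ∑ n, ∑ k, Bp n k :=
    Finset.sum_congr rfl fun n _ => Finset.sum_congr rfl fun k _ => habsp n k
  have habs2 : (∑ n, ∑ k, |Bt n k|) = ∑ n, ∑ k, Bt n k :=
    Finset.sum_congr rfl fun n _ => Finset.sum_congr rfl fun k _ => habst n k
  have htv2 : (τ/2) * smoothTV N K ε nbr Bp ≤ (τ/2) * smoothTV N K ε nbr Bt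
      + (τ/2) * (∑ n, ∑ k, (Pmat N K ε nbr Bt n k * ((Bp n k)^2 - (Bt n k)^2)
          - 2 * (Pmat N K ε nbr Bt n k * Zmat N K ε nbr Bt n k) * (Bp n k - Bt n k))) := by
    have := mul_le_mul_of_nonneg_left htv (by positivity : (0:ℝ) ≤ τ/2)
    linarith [this]
  rw [habs1, habs2]
  linarith [hdata, htv2, hneg, hsplit.symm.le, hsplit.le]
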